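/- Let m, k ≥ 1 be natural numbers, Θ̄ a real m×m and Ω̄ a real k×k symmetric positive definite matrix, Ā a real k×m matrix, b̄ ∈ ℝ^k, s̄ ∈ ℝ^m, R̄ an invertible real m×m matrix, z ∈ ℝ^m, and ψ : ℝ^k → ℝ a convex differentiable function. Define L : ℝ^m → ℝ by L(θ) = −(1/2)(z − R̄θ − s̄)ᵀΘ̄⁻¹(z − R̄θ − s̄) + inf over (b,g) ∈ ℝ^m × ℝ^k of [(1/2)(b − R̄θ − s̄)ᵀΘ̄⁻¹(b − R̄θ − s̄) + (1/2)(g − Āb − b̄)ᵀΩ̄⁻¹(g − Āb − b̄) + ψ(g)] (this infimum is finite since ψ, being convex and finite, admits an affine minorant). Suppose g* ∈ ℝ^k minimizes the function g ↦ (1/2)(g − Āz − b̄)ᵀΩ̄⁻¹(g − Āz − b̄) + ψ(g) over ℝ^k. Then L attains its maximum over ℝ^m at θ̂ = R̄⁻¹z − R̄⁻¹s̄ + R̄⁻¹Θ̄·ĀᵀΩ̄⁻¹(Āz + b̄ − g*); that is, L(θ) ≤ L(θ̂) for every θ ∈ ℝ^m. -/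

import Mathlib

open Matrix

private lemma pd_nonneg' {n : ℕ} {M : Matrix (Fin n) (Fin n) ℝ} (hM : M.PosDef) (x : Fin n → ℝ) :
    0 ≤ x ⬝ᵥ M.mulVec x := by
  have := hM.posSemidef.dotProduct_mulVec_nonneg x; simpa using this

private lemma pd_unit' {n : ℕ} {M : Matrix (Fin n) (Fin n) ℝ} (hM : M.PosDef) : IsUnit M.det :=
  isUnit_iff_ne_zero.2 hM.det_pos.ne'

private lemma dot_symm' {n : ℕ} {M : Matrix (Fin n) (Fin n) ℝ} (hM : Mᵀ = M) (x y : Fin n → ℝ) :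
    x ⬝ᵥ M.mulVec y = y ⬝ᵥ M.mulVec x := by
  rw [Matrix.dotProduct_mulVec, ← Matrix.mulVec_transpose, hM, dotProduct_comm]

private lemma pd_inv_symm' {n : ℕ} {M : Matrix (Fin n) (Fin n) ℝ} (hM : M.PosDef) :
    (M⁻¹)ᵀ = M⁻¹ := hM.inv.isHermitian.eq

private lemma dot_transfer {n m : ℕ} (A : Matrix (Fin n) (Fin m) ℝ) (v : Fin n → ℝ)
    (b : Fin m → ℝ) : v ⬝ᵥ A.mulVec b = Aᵀ.mulVec v ⬝ᵥ b := by
  rw [Matrix.dotProduct_mulVec, Matrix.mulVec_transpose]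

private lemma quad_lb' {n : ℕ} {M : Matrix (Fin n) (Fin n) ℝ} (hM : M.PosDef) (p w : Fin n → ℝ) :
    -((1/2) * (p ⬝ᵥ M.mulVec p)) ≤ (1/2) * (w ⬝ᵥ M⁻¹.mulVec w) + p ⬝ᵥ w := by
  have h0 : 0 ≤ (w + M.mulVec p) ⬝ᵥ M⁻¹.mulVec (w + M.mulVec p) := pd_nonneg' hM.inv _
  have hinv : M⁻¹.mulVec (M.mulVec p) = p := by
    rw [Matrix.mulVec_mulVec, Matrix.nonsing_inv_mul M (pd_unit' hM), Matrix.one_mulVec]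
  have hswap : (M.mulVec p) ⬝ᵥ M⁻¹.mulVec w = w ⬝ᵥ p := by
    rw [dot_symm' (pd_inv_symm' hM), hinv]
  rw [Matrix.mulVec_add, dotProduct_add, add_dotProduct, add_dotProduct, hinv] at h0
  rw [hswap] at h0
  have h1 : (M.mulVec p) ⬝ᵥ p = p ⬝ᵥ M.mulVec p := dotProduct_comm _ _
  have h2 : w ⬝ᵥ p = p ⬝ᵥ w := dotProduct_comm _ _
  linarith [h0]

private lemma minorant' {k : ℕ} {Ω : Matrix (Fin k) (Fin k) ℝ} (hΩ : Ω.PosDef)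
    (ψ : (Fin k → ℝ) → ℝ) (hψ : ConvexOn ℝ Set.univ ψ) (a gstar : Fin k → ℝ)
    (hmin : ∀ g, (1/2) * ((gstar - a) ⬝ᵥ Ω⁻¹.mulVec (gstar - a)) + ψ gstar
      ≤ (1/2) * ((g - a) ⬝ᵥ Ω⁻¹.mulVec (g - a)) + ψ g)
    (g : Fin k → ℝ) :
    ψ gstar + (Ω⁻¹.mulVec (a - gstar)) ⬝ᵥ (g - gstar) ≤ ψ g := by
  set d := g - gstar with hd
  set e := gstar - a with he
  set q := d ⬝ᵥ Ω⁻¹.mulVec d with hq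
  have hq0 : 0 ≤ q := pd_nonneg' hΩ.inv d
  have key : ∀ t : ℝ, 0 < t → t ≤ 1 →
      0 ≤ d ⬝ᵥ Ω⁻¹.mulVec e + t/2 * q + (ψ g - ψ gstar) := by
    intro t ht0 ht1
    have hcomb : (1-t) • gstar + t • g = gstar + t • d := by
      funext i
      simp [hd, Pi.smul_apply, smul_eq_mul]
      ring
    have hconv : ψ (gstar + t • d) ≤ (1-t) * ψ gstar + t * ψ g := by
      rw [← hcomb]
      exact hψ.2 (Set.mem_univ gstar) (Set.mem_univ g) (by linarith) (le_of_lt ht0) (by ring)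
    have hm := hmin (gstar + t • d)
    have hexp : (gstar + t • d - a) ⬝ᵥ Ω⁻¹.mulVec (gstar + t • d - a)
        = e ⬝ᵥ Ω⁻¹.mulVec e + 2 * t * (d ⬝ᵥ Ω⁻¹.mulVec e) + t^2 * q := by
      have h1 : gstar + t • d - a = e + t • d := by rw [he]; abel
      rw [h1, Matrix.mulVec_add, Matrix.mulVec_smul, dotProduct_add, add_dotProduct,
        add_dotProduct, dotProduct_smul, smul_dotProduct, smul_dotProduct, dotProduct_smul,
        dot_symm' (pd_inv_symm' hΩ) e d]
      simp [smul_eq_mul, hq]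
      ring
    rw [hexp] at hm
    nlinarith [hm, hconv]
  have hvd : (Ω⁻¹.mulVec (a - gstar)) ⬝ᵥ d = -(d ⬝ᵥ Ω⁻¹.mulVec e) := by
    have : a - gstar = -e := by rw [he]; abel
    rw [this, Matrix.mulVec_neg, dotProduct_comm]
    simp [dotProduct_neg]
  rw [hvd]
  by_contra hcon
  push_neg at hcon
  have hXneg : d ⬝ᵥ Ω⁻¹ *ᵥ e + (ψ g - ψ gstar) < 0 := by linarith
  obtain ⟨t, ht0, ht1, htq⟩ :
      ∃ t : ℝ, 0 < t ∧ t ≤ 1 ∧ t * q ≤ -(d ⬝ᵥ Ω⁻¹ *ᵥ e + (ψ g - ψ gstar)) := by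
    rcases eq_or_lt_of_le hq0 with hq' | hq'
    · exact ⟨1, one_pos, le_rfl, by rw [← hq']; linarith⟩
    · refine ⟨min 1 (-(d ⬝ᵥ Ω⁻¹ *ᵥ e + (ψ g - ψ gstar)) / q),
        lt_min one_pos (div_pos (by linarith) hq'), min_le_left _ _, ?_⟩
      have h2 := min_le_right 1 (-(d ⬝ᵥ Ω⁻¹ *ᵥ e + (ψ g - ψ gstar)) / q)
      have h3 := mul_le_mul_of_nonneg_right h2 hq'.le
      have h4 : -(d ⬝ᵥ Ω⁻¹ *ᵥ e + (ψ g - ψ gstar)) / q * q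
          = -(d ⬝ᵥ Ω⁻¹ *ᵥ e + (ψ g - ψ gstar)) := by field_simp
      linarith
  have hk := key t ht0 ht1
  have h5 : t / 2 * q = t * q / 2 := by ring
  linarith

/-- Theorem 4.1, estimating equation for the selective MLE:
the post-selection log-likelihood `L` attains its maximum at
`θ̂ = R̄⁻¹z − R̄⁻¹s̄ + R̄⁻¹Θ̄ Āᵀ Ω̄⁻¹ (Āz + b̄ − g*)`, where `g*` minimizes the
`k`-dimensional convex problem. -/
theorem selective_mle_estimating_equation
    (m k : ℕ) (hm : 1 ≤ m) (hk : 1 ≤ k)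
    (Θbar : Matrix (Fin m) (Fin m) ℝ) (hΘ : Θbar.PosDef)
    (Ωbar : Matrix (Fin k) (Fin k) ℝ) (hΩ : Ωbar.PosDef)
    (Abar : Matrix (Fin k) (Fin m) ℝ) (bbar : Fin k → ℝ) (sbar : Fin m → ℝ)
    (Rbar : Matrix (Fin m) (Fin m) ℝ) (hR : IsUnit Rbar.det)
    (z : Fin m → ℝ)
    (ψ : (Fin k → ℝ) → ℝ) (hψconv : ConvexOn ℝ Set.univ ψ) (hψdiff : Differentiable ℝ ψ)
    (L : (Fin m → ℝ) → ℝ)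
    (hL : L = fun θ =>
      -(1 / 2) * ((z - Rbar.mulVec θ - sbar) ⬝ᵥ
          Θbar⁻¹.mulVec (z - Rbar.mulVec θ - sbar))
      + ⨅ bg : (Fin m → ℝ) × (Fin k → ℝ),
          ((1 / 2) * ((bg.1 - Rbar.mulVec θ - sbar) ⬝ᵥ
              Θbar⁻¹.mulVec (bg.1 - Rbar.mulVec θ - sbar))
            + (1 / 2) * ((bg.2 - Abar.mulVec bg.1 - bbar) ⬝ᵥ
                Ωbar⁻¹.mulVec (bg.2 - Abar.mulVec bg.1 - bbar))
            + ψ bg.2))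
    (gstar : Fin k → ℝ)
    (hgstar : ∀ g : Fin k → ℝ,
      (1 / 2) * ((gstar - Abar.mulVec z - bbar) ⬝ᵥ
          Ωbar⁻¹.mulVec (gstar - Abar.mulVec z - bbar)) + ψ gstar
      ≤ (1 / 2) * ((g - Abar.mulVec z - bbar) ⬝ᵥ
          Ωbar⁻¹.mulVec (g - Abar.mulVec z - bbar)) + ψ g) :
    ∀ θ : Fin m → ℝ,
      L θ ≤ L (Rbar⁻¹.mulVec z - Rbar⁻¹.mulVec sbar
        + (Rbar⁻¹ * Θbar * Abarᵀ * Ωbar⁻¹).mulVec (Abar.mulVec z + bbar - gstar)) := by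
  intro θ
  -- notation
  set w0 : Fin k → ℝ := Abar.mulVec z + bbar - gstar with hw0
  set v : Fin k → ℝ := Ωbar⁻¹.mulVec w0 with hv
  set p : Fin m → ℝ := Abarᵀ.mulVec v with hp
  set tv : Fin m → ℝ := Θbar.mulVec p with htv
  set θhat : Fin m → ℝ := Rbar⁻¹.mulVec z - Rbar⁻¹.mulVec sbar
      + (Rbar⁻¹ * Θbar * Abarᵀ * Ωbar⁻¹).mulVec w0 with hθhat
  set Pq : ℝ := p ⬝ᵥ Θbar.mulVec p with hPq
  set Vq : ℝ := v ⬝ᵥ Ωbar.mulVec v with hVq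
  set C : ℝ := ψ gstar + (1/2) * ((gstar - Abar.mulVec z - bbar) ⬝ᵥ
      Ωbar⁻¹.mulVec (gstar - Abar.mulVec z - bbar)) with hC
  -- basic matrix facts
  have hΩv : Ωbar.mulVec v = w0 := by
    rw [hv, Matrix.mulVec_mulVec, Matrix.mul_nonsing_inv _ (pd_unit' hΩ), Matrix.one_mulVec]
  have hRθhat : Rbar.mulVec θhat = z - sbar + tv := by
    rw [hθhat, Matrix.mulVec_add, Matrix.mulVec_sub, Matrix.mulVec_mulVec,
      Matrix.mulVec_mulVec, Matrix.mulVec_mulVec, Matrix.mul_nonsing_inv _ hR,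
      Matrix.one_mulVec, Matrix.one_mulVec]
    congr 1
    have h1 : Rbar * (Rbar⁻¹ * Θbar * Abarᵀ * Ωbar⁻¹) = Θbar * Abarᵀ * Ωbar⁻¹ := by
      rw [← Matrix.mul_assoc, ← Matrix.mul_assoc, ← Matrix.mul_assoc, Matrix.mul_nonsing_inv _ hR, one_mul]
    rw [h1, htv, hp, hv]
    simp [Matrix.mulVec_mulVec, Matrix.mul_assoc]
  have hψlb : ∀ g : Fin k → ℝ, ψ gstar + v ⬝ᵥ (g - gstar) ≤ ψ g := by
    intro g
    have hmin' : ∀ g : Fin k → ℝ,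
        (1/2) * ((gstar - (Abar.mulVec z + bbar)) ⬝ᵥ
          Ωbar⁻¹.mulVec (gstar - (Abar.mulVec z + bbar))) + ψ gstar
        ≤ (1/2) * ((g - (Abar.mulVec z + bbar)) ⬝ᵥ
          Ωbar⁻¹.mulVec (g - (Abar.mulVec z + bbar))) + ψ g := by
      intro g'
      have := hgstar g'
      simpa [sub_sub] using this
    have h := minorant' hΩ ψ hψconv (Abar.mulVec z + bbar) gstar hmin' g
    have ha : Abar.mulVec z + bbar - gstar = w0 := by rw [hw0]
    rw [ha] at h
    rw [← hv] at h
    exact h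
  -- main pointwise lower bound
  have main : ∀ (θ' : Fin m → ℝ) (bg : (Fin m → ℝ) × (Fin k → ℝ)),
      ψ gstar + v ⬝ᵥ bbar - v ⬝ᵥ gstar - (1/2) * Vq - (1/2) * Pq
        + p ⬝ᵥ (Rbar.mulVec θ' + sbar)
      ≤ (1 / 2) * ((bg.1 - Rbar.mulVec θ' - sbar) ⬝ᵥ
            Θbar⁻¹.mulVec (bg.1 - Rbar.mulVec θ' - sbar))
        + (1 / 2) * ((bg.2 - Abar.mulVec bg.1 - bbar) ⬝ᵥ
            Ωbar⁻¹.mulVec (bg.2 - Abar.mulVec bg.1 - bbar))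
        + ψ bg.2 := by
    intro θ' bg
    obtain ⟨b, g⟩ := bg
    dsimp only
    have q1 := quad_lb' hΘ p (b - Rbar.mulVec θ' - sbar)
    have q2 := quad_lb' hΩ v (g - Abar.mulVec b - bbar)
    have hψg := hψlb g
    have hsplit : v ⬝ᵥ (g - gstar)
        = v ⬝ᵥ (g - Abar.mulVec b - bbar) + p ⬝ᵥ (b - Rbar.mulVec θ' - sbar)
          + p ⬝ᵥ (Rbar.mulVec θ' + sbar) + v ⬝ᵥ bbar - v ⬝ᵥ gstar := by
      have hAb : v ⬝ᵥ Abar.mulVec b = p ⬝ᵥ b := by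
        rw [dot_transfer, hp]
      simp only [dotProduct_sub, dotProduct_add, hAb]
      ring
    rw [hsplit] at hψg
    rw [← hPq] at q1
    rw [← hVq] at q2
    linarith
  -- infimum lower bound machinery
  have hbdd : ∀ θ' : Fin m → ℝ, BddBelow (Set.range fun bg : (Fin m → ℝ) × (Fin k → ℝ) =>
      (1 / 2) * ((bg.1 - Rbar.mulVec θ' - sbar) ⬝ᵥ
          Θbar⁻¹.mulVec (bg.1 - Rbar.mulVec θ' - sbar))
        + (1 / 2) * ((bg.2 - Abar.mulVec bg.1 - bbar) ⬝ᵥ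
            Ωbar⁻¹.mulVec (bg.2 - Abar.mulVec bg.1 - bbar))
        + ψ bg.2) := by
    intro θ'
    refine ⟨ψ gstar + v ⬝ᵥ bbar - v ⬝ᵥ gstar - (1/2) * Vq - (1/2) * Pq
        + p ⬝ᵥ (Rbar.mulVec θ' + sbar), ?_⟩
    rintro x ⟨bg, rfl⟩
    exact main θ' bg
  -- useful dot product values
  have hVq2 : Vq = p ⬝ᵥ z + v ⬝ᵥ bbar - v ⬝ᵥ gstar := by
    rw [hVq, hΩv, hw0, dotProduct_sub, dotProduct_add, dot_transfer, ← hp]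
  have hCval : (gstar - Abar.mulVec z - bbar) ⬝ᵥ
      Ωbar⁻¹.mulVec (gstar - Abar.mulVec z - bbar) = Vq := by
    have he : gstar - Abar.mulVec z - bbar = -(Ωbar.mulVec v) := by
      rw [hΩv, hw0]; abel
    rw [he, Matrix.mulVec_neg, dotProduct_neg, neg_dotProduct, neg_neg]
    have : Ωbar⁻¹.mulVec (Ωbar.mulVec v) = v := by
      rw [Matrix.mulVec_mulVec, Matrix.nonsing_inv_mul _ (pd_unit' hΩ), Matrix.one_mulVec]
    rw [this, dotProduct_comm, hVq]
  have hPz : p ⬝ᵥ (Rbar.mulVec θhat + sbar) = p ⬝ᵥ z + Pq := by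
    have : Rbar.mulVec θhat + sbar = z + tv := by rw [hRθhat]; abel
    rw [this, dotProduct_add, htv, ← hPq]
  have hzhat : (z - Rbar.mulVec θhat - sbar) ⬝ᵥ
      Θbar⁻¹.mulVec (z - Rbar.mulVec θhat - sbar) = Pq := by
    have he : z - Rbar.mulVec θhat - sbar = -tv := by rw [hRθhat]; abel
    rw [he, Matrix.mulVec_neg, dotProduct_neg, neg_dotProduct, neg_neg, htv]
    have : Θbar⁻¹.mulVec (Θbar.mulVec p) = p := by
      rw [Matrix.mulVec_mulVec, Matrix.nonsing_inv_mul _ (pd_unit' hΘ), Matrix.one_mulVec]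
    rw [this, dotProduct_comm, hPq]
  -- upper bound : L θ ≤ C
  have hupper : L θ ≤ C := by
    simp only [hL]
    have h1 := ciInf_le (hbdd θ) ((z, gstar) : (Fin m → ℝ) × (Fin k → ℝ))
    dsimp only at h1
    rw [hCval] at h1
    linarith [h1, hC]
  -- lower bound : C ≤ L θhat
  have hlower : C ≤ L θhat := by
    simp only [hL]
    have h2 : C + (1/2) * Pq ≤ ⨅ bg : (Fin m → ℝ) × (Fin k → ℝ),
        ((1 / 2) * ((bg.1 - Rbar.mulVec θhat - sbar) ⬝ᵥ
            Θbar⁻¹.mulVec (bg.1 - Rbar.mulVec θhat - sbar))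
          + (1 / 2) * ((bg.2 - Abar.mulVec bg.1 - bbar) ⬝ᵥ
              Ωbar⁻¹.mulVec (bg.2 - Abar.mulVec bg.1 - bbar))
          + ψ bg.2) := by
      apply le_ciInf
      intro bg
      have h3 := main θhat bg
      rw [hPz] at h3
      have hCeq : C = ψ gstar + (1/2) * Vq := by rw [hC, hCval]
      linarith
    rw [hzhat]
    linarith
  exact le_trans hupper hlower
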